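/- arXiv:2402.13792 — 3 statements merged into one kernel-verified Lean document; each statement's English description precedes it below -/
import Mathlib

section
/- Let V be a finite nonempty type of cardinality m and E : V → V → Prop a directed edge relation satisfying: (Check 1) every vertex has at most one outgoing edge, i.e., for every x the set {y | E x y} has at most one element; (Check 2) every vertex has at most one incoming edge, i.e., for every y the set {x | E x y} has at most one element; (Check 3) E is acyclic, i.e., the transitive closure of E is irreflexive; and the number of edges, i.e., the cardinality of {p : V × V | E p.1 p.2}, equals m - 1. Then there exists an enumeration f : Fin m ≃ V such that for all x y, E x y holds if and only if there exists i with i + 1 < m, x = f i and y = f (i+1); that is, the graph is a single directed path (a straight-line chain) visiting every vertex exactly once. -/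
/-! Out- and in-degrees at most one and no cycles make the graph a disjoint union of directed
paths. By the out-degree bound the edges correspond to the vertices that have a successor, so
`m - 1` edges leave exactly one sink, i.e. exactly one path. Induction removes a source `s`: the
remaining graph is again a single path, and it starts at the successor of `s`, because its first
vertex has no predecessor other than `s`, while `s` itself cannot be a second sink. -/

open Relation

section

variable {V W : Type*} {E : V → V → Prop}

structure IsLinearForest (E : V → V → Prop) : Prop where
  out_subsingleton : ∀ x, {y | E x y}.Subsingleton
  in_subsingleton : ∀ y, {x | E x y}.Subsingleton
  acyclic : Std.Irrefl (TransGen E)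

theorem IsLinearForest.comap (hE : IsLinearForest E) {f : W → V} (hf : f.Injective) :
    IsLinearForest (fun a b => E (f a) (f b)) where
  out_subsingleton x := (hE.out_subsingleton (f x)).preimage hf
  in_subsingleton y := (hE.in_subsingleton (f y)).preimage hf
  acyclic := ⟨fun a ha => hE.acyclic.irrefl (f a) (TransGen.lift f (fun _ _ h => h) _ _ ha)⟩

theorem IsLinearForest.exists_forall_not_rel [Finite V] [Nonempty V] (hE : IsLinearForest E) :
    ∃ s, ∀ x, ¬ E x s := by
  have := hE.acyclic
  have hwf : WellFounded E :=
    Subrelation.wf TransGen.single (Finite.wellFounded_of_trans_of_irrefl (TransGen E))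
  obtain ⟨s, -, hs⟩ := hwf.has_min Set.univ Set.univ_nonempty
  exact ⟨s, fun x hx => hs x trivial hx⟩

theorem natCard_edges_eq_ncard (hE : ∀ x, {y | E x y}.Subsingleton) :
    Nat.card {p : V × V // E p.1 p.2} = {x | ∃ y, E x y}.ncard :=
  Nat.card_congr <| Equiv.ofBijective (fun p => ⟨p.1.1, p.1.2, p.2⟩)
    ⟨fun p q hpq => by
      obtain ⟨⟨x, y⟩, hxy⟩ := p
      obtain ⟨⟨x', y'⟩, hxy'⟩ := q
      obtain rfl : x = x' := congrArg Subtype.val hpq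
      obtain rfl : y = y' := hE x hxy hxy'
      rfl,
    fun ⟨x, y, hxy⟩ => ⟨⟨(x, y), hxy⟩, rfl⟩⟩

theorem subsingleton_sinks_of_natCard_edges [Finite V] (hE : ∀ x, {y | E x y}.Subsingleton)
    (hedges : Nat.card {p : V × V // E p.1 p.2} = Nat.card V - 1) :
    {x | ∀ y, ¬ E x y}.Subsingleton := by
  have hsinks : {x | ∀ y, ¬ E x y} = {x | ∃ y, E x y}ᶜ := by ext; simp
  have hsum := Set.ncard_add_ncard_compl {x | ∃ y, E x y}
  rw [← natCard_edges_eq_ncard hE, hedges, ← hsinks] at hsum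
  exact Set.ncard_le_one_iff_subsingleton.mp (by omega)

def IsPathNumbering {n : ℕ} (E : V → V → Prop) (e : V ≃ Fin n) : Prop :=
  ∀ x y, E x y ↔ (e y : ℕ) = e x + 1

namespace IsPathNumbering

variable {n : ℕ} {e : V ≃ Fin n}

theorem exists_rel_of_ne_zero (he : IsPathNumbering E e) {y : V} (hy : (e y : ℕ) ≠ 0) :
    ∃ x, E x y :=
  ⟨e.symm ⟨e y - 1, by omega⟩, (he _ _).2 (by simp; omega)⟩

theorem not_rel_of_succ_eq (he : IsPathNumbering E e) {x : V} (hx : (e x : ℕ) + 1 = n) (y : V) :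
    ¬ E x y := fun hxy => by
  have := (e y).2
  rw [(he x y).1 hxy] at this
  omega

theorem comap {e : W ≃ Fin n} (φ : W ≃ V) (he : IsPathNumbering (fun a b => E (φ a) (φ b)) e) :
    IsPathNumbering E (φ.symm.trans e) := fun x y => by
  simpa using he (φ.symm x) (φ.symm y)

theorem option {R : Option W → Option W → Prop} {e : W ≃ Fin n}
    (he : IsPathNumbering (fun a b => R (some a) (some b)) e) (hsrc : ∀ a, ¬ R a none)
    (hfirst : ∀ w, R none (some w) ↔ (e w : ℕ) = 0) :
    IsPathNumbering R (e.optionCongr.trans (finSuccEquiv n).symm) := by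
  rintro (_ | a) (_ | b)
  · simp [hsrc]
  · simp [hfirst]
  · simp [hsrc]
  · simp [he a b]

theorem rel_iff_exists (he : IsPathNumbering E e) (x y : V) :
    E x y ↔ ∃ i : ℕ, ∃ h : i + 1 < n,
      x = e.symm ⟨i, Nat.lt_of_succ_lt h⟩ ∧ y = e.symm ⟨i + 1, h⟩ := by
  rw [he x y]
  constructor
  · intro hxy
    exact ⟨e x, hxy ▸ (e y).2, by simp, by simp [Equiv.eq_symm_apply, Fin.ext_iff, hxy]⟩
  · rintro ⟨i, h, rfl, rfl⟩
    simp

end IsPathNumbering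

theorem IsLinearForest.exists_isPathNumbering [Finite V] (hE : IsLinearForest E)
    (hsink : {x | ∀ y, ¬ E x y}.Subsingleton) {m : ℕ} (hm : Nat.card V = m) :
    ∃ e : V ≃ Fin m, IsPathNumbering E e := by
  induction m generalizing V with
  | zero => exact ⟨Finite.equivFinOfCardEq hm, fun x => (Finite.equivFinOfCardEq hm x).elim0⟩
  | succ m ih =>
    classical
    have : Nonempty V := Nat.card_pos_iff.mp (by omega) |>.1
    obtain ⟨s, hs⟩ := hE.exists_forall_not_rel
    have hcard : Nat.card {v // v ≠ s} = m := by
      have := Nat.card_congr (Equiv.optionSubtypeNe s)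
      rw [Finite.card_option] at this
      omega
    have hsink_lift (a : {v // v ≠ s}) (ha : ∀ b : {v // v ≠ s}, ¬ E a b) (y : V) : ¬ E a y := by
      by_cases hy : y = s
      · exact hy ▸ hs a
      · exact ha ⟨y, hy⟩
    obtain ⟨e, he⟩ := ih (hE.comap Subtype.val_injective)
      (fun a ha b hb => Subtype.ext (hsink (hsink_lift a ha) (hsink_lift b hb))) hcard
    have hfirst_of_rel (w : {v // v ≠ s}) (hsw : E s w) : (e w : ℕ) = 0 := by
      by_contra hne
      obtain ⟨u, hu⟩ := he.exists_rel_of_ne_zero hne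
      exact u.2 (hE.in_subsingleton w hu hsw)
    have hfirst (w : {v // v ≠ s}) : E s w ↔ (e w : ℕ) = 0 := by
      refine ⟨hfirst_of_rel w, fun hw => ?_⟩
      obtain ⟨t, hst⟩ : ∃ t, E s t := by
        by_contra! hs_sink
        let z := e.symm ⟨m - 1, by have := (e w).2; omega⟩
        have hz := hsink_lift z (he.not_rel_of_succ_eq (by have := (e w).2; simp [z]; omega))
        exact z.2 (hsink hz hs_sink)
      have hts : t ≠ s := fun h => hs s (h ▸ hst)
      obtain rfl : (⟨t, hts⟩ : {v // v ≠ s}) = w :=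
        e.injective (Fin.ext (by rw [hw, hfirst_of_rel _ hst]))
      exact hst
    exact ⟨_, (he.option (fun a => hs _) hfirst).comap (Equiv.optionSubtypeNe s)⟩

end

theorem stmt_1_general (m : ℕ) (V : Type*) [Fintype V]
    (hcard : Fintype.card V = m) (E : V → V → Prop)
    (check1 : ∀ x : V, {y : V | E x y}.Subsingleton)
    (check2 : ∀ y : V, {x : V | E x y}.Subsingleton)
    (check3 : Irreflexive (Relation.TransGen E))
    (hedges : Nat.card {p : V × V // E p.1 p.2} = m - 1) :
    ∃ f : Fin m ≃ V, ∀ x y, E x y ↔ ∃ i : ℕ, ∃ h : i + 1 < m,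
      x = f ⟨i, Nat.lt_of_succ_lt h⟩ ∧ y = f ⟨i + 1, h⟩ := by
  rw [← Nat.card_eq_fintype_card] at hcard
  have hE : IsLinearForest E := ⟨check1, check2, ⟨check3⟩⟩
  obtain ⟨e, he⟩ := hE.exists_isPathNumbering
    (subsingleton_sinks_of_natCard_edges check1 (hcard ▸ hedges)) hcard
  exact ⟨e.symm, he.rel_iff_exists⟩

/-- If a directed edge relation on a finite nonempty vertex set of
cardinality `m` satisfies the three checks (at most one outgoing edge per vertex,
at most one incoming edge per vertex, acyclicity) and has exactly `m - 1` edges,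
then it is the consecutive-edge relation of some enumeration `f : Fin m ≃ V`,
i.e., a single directed path visiting every vertex exactly once. -/
theorem stmt_1 (m : ℕ) (V : Type*) [Fintype V] [Nonempty V]
    (hcard : Fintype.card V = m) (E : V → V → Prop)
    (check1 : ∀ x : V, {y : V | E x y}.Subsingleton)
    (check2 : ∀ y : V, {x : V | E x y}.Subsingleton)
    (check3 : Irreflexive (Relation.TransGen E))
    (hedges : Nat.card {p : V × V // E p.1 p.2} = m - 1) :
    ∃ f : Fin m ≃ V, ∀ x y, E x y ↔ ∃ i : ℕ, ∃ h : i + 1 < m,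
      x = f ⟨i, Nat.lt_of_succ_lt h⟩ ∧ y = f ⟨i + 1, h⟩ :=
  stmt_1_general m V hcard E check1 check2 check3 hedges
end

section
/- Let V be a finite nonempty type of cardinality m and E : V → V → Prop a directed edge relation satisfying the three checks — every vertex has at most one outgoing edge, every vertex has at most one incoming edge, and the transitive closure of E is irreflexive — and suppose the number of edges, i.e., the cardinality of {p : V × V | E p.1 p.2}, equals m - 1. Then there exists exactly one vertex with no outgoing edge (the last trace) and exactly one vertex with no incoming edge (the first trace). -/
/-! A relation in which every vertex has at most one successor has exactly as many edges as
vertices with a successor. With `m - 1` edges on `m` vertices, exactly one vertex therefore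
has no successor; applied to the converse relation, exactly one vertex has no predecessor. -/

theorem natCard_edges_eq_natCard_dom {α β : Type*} {E : α → β → Prop}
    (hE : ∀ x, {y | E x y}.Subsingleton) :
    Nat.card {p : α × β // E p.1 p.2} = Nat.card {x // ∃ y, E x y} := by
  refine Nat.card_congr (Equiv.ofBijective (fun p => ⟨p.1.1, p.1.2, p.2⟩) ⟨?_, ?_⟩)
  · rintro ⟨⟨x, y⟩, hxy⟩ ⟨⟨x', y'⟩, hxy'⟩ h
    obtain rfl : x = x' := congrArg Subtype.val h
    obtain rfl : y = y' := hE x hxy hxy'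
    rfl
  · rintro ⟨x, y, hxy⟩
    exact ⟨⟨(x, y), hxy⟩, rfl⟩

theorem Set.existsUnique_notMem_of_ncard_add_one {α : Type*} [Finite α] {S : Set α}
    (hS : S.ncard + 1 = Nat.card α) : ∃! x, x ∉ S := by
  have hSc : Sᶜ.ncard = 1 := by
    have := Set.ncard_add_ncard_compl S
    omega
  obtain ⟨a, ha⟩ := Set.ncard_eq_one.mp hSc
  exact ⟨a, (Set.ext_iff.mp ha a).mpr rfl, fun x hx => (Set.ext_iff.mp ha x).mp hx⟩

theorem existsUnique_forall_not_of_card_edges_add_one {V : Type*} [Finite V]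
    {E : V → V → Prop} (hE : ∀ x, {y | E x y}.Subsingleton)
    (hedges : Nat.card {p : V × V // E p.1 p.2} + 1 = Nat.card V) :
    ∃! x : V, ∀ y, ¬ E x y := by
  rw [natCard_edges_eq_natCard_dom hE, ← Set.coe_ofPred, Nat.card_coe_set_eq] at hedges
  simpa using Set.existsUnique_notMem_of_ncard_add_one hedges

theorem stmt_5_general (m : ℕ) (V : Type*) [Fintype V] [Nonempty V]
    (hcard : Fintype.card V = m) (E : V → V → Prop)
    (check1 : ∀ x : V, {y : V | E x y}.Subsingleton)
    (check2 : ∀ y : V, {x : V | E x y}.Subsingleton)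
    (hedges : Nat.card {p : V × V // E p.1 p.2} = m - 1) :
    (∃! x : V, ∀ y : V, ¬ E x y) ∧ (∃! y : V, ∀ x : V, ¬ E x y) := by
  have hV : Nat.card V = m := by rw [Nat.card_eq_fintype_card, hcard]
  have hm : 0 < m := hcard ▸ Fintype.card_pos
  have hout : Nat.card {p : V × V // E p.1 p.2} + 1 = Nat.card V := by omega
  have hin : Nat.card {p : V × V // flip E p.1 p.2} + 1 = Nat.card V := by
    rwa [← Nat.card_congr ((Equiv.prodComm V V).subtypeEquiv fun _ => Iff.rfl)]
  exact ⟨existsUnique_forall_not_of_card_edges_add_one check1 hout,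
    existsUnique_forall_not_of_card_edges_add_one check2 hin⟩

/-- Under the three checks (at most one outgoing edge, at most one
incoming edge, acyclicity) and with exactly `m - 1` edges on `m` vertices, there
is exactly one vertex with no outgoing edge (the last trace) and exactly one
vertex with no incoming edge (the first trace). -/
theorem stmt_5 (m : ℕ) (V : Type*) [Fintype V] [Nonempty V]
    (hcard : Fintype.card V = m) (E : V → V → Prop)
    (check1 : ∀ x : V, {y : V | E x y}.Subsingleton)
    (check2 : ∀ y : V, {x : V | E x y}.Subsingleton)
    (check3 : Irreflexive (Relation.TransGen E))
    (hedges : Nat.card {p : V × V // E p.1 p.2} = m - 1) :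
    (∃! x : V, ∀ y : V, ¬ E x y) ∧ (∃! y : V, ∀ x : V, ¬ E x y) :=
  stmt_5_general m V hcard E check1 check2 hedges
end

section
/- Let V be a finite type of cardinality m and let f, g : Fin m ≃ V be two enumerations of V such that for all x y, (there exists i with i + 1 < m, x = f i and y = f (i+1)) if and only if (there exists i with i + 1 < m, x = g i and y = g (i+1)); that is, f and g induce the same consecutive-edge relation on V. Then f = g. In other words, a directed straight-line chain through all vertices determines its vertex ordering uniquely. -/
open Function

section

variable {m : ℕ} {V : Type*}

def consecutiveRel (f : Fin m → V) (x y : V) : Prop :=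
  ∃ i : ℕ, ∃ h : i + 1 < m, x = f ⟨i, Nat.lt_of_succ_lt h⟩ ∧ y = f ⟨i + 1, h⟩

theorem consecutiveRel_apply_apply_iff {f : Fin m → V} (hf : Injective f) {i j : Fin m} :
    consecutiveRel f (f i) (f j) ↔ (j : ℕ) = i + 1 := by
  constructor
  · rintro ⟨k, hk, hi, hj⟩
    rw [hf hi, hf hj]
  · intro hji
    exact ⟨i, hji ▸ j.isLt, rfl, congrArg f (Fin.ext hji)⟩

theorem exists_consecutiveRel_apply_iff {f : Fin m → V} (hf : Injective f) {i : Fin m} :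
    (∃ x, consecutiveRel f x (f i)) ↔ (i : ℕ) ≠ 0 := by
  constructor
  · rintro ⟨x, k, hk, -, hi⟩
    rw [hf hi]
    exact k.succ_ne_zero
  · intro hi
    obtain ⟨k, hk⟩ := Nat.exists_eq_succ_of_ne_zero hi
    exact ⟨f ⟨k, by omega⟩, (consecutiveRel_apply_apply_iff hf).2 hk⟩

theorem Equiv.eq_of_consecutiveRel_eq {f g : Fin m ≃ V}
    (hfg : consecutiveRel f = consecutiveRel g) : f = g := by
  cases m with
  | zero => exact Subsingleton.elim f g
  | succ n =>
    ext i
    induction i using Fin.induction with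
    | zero =>
      -- `f 0` and `g 0` are both the unique vertex without an incoming edge.
      have hg0 : ¬ ∃ x, consecutiveRel f x (g 0) := by
        rw [hfg, exists_consecutiveRel_apply_iff g.injective]
        exact not_not_intro rfl
      rw [← f.apply_symm_apply (g 0), exists_consecutiveRel_apply_iff f.injective,
        not_not, Fin.val_eq_zero_iff, f.symm_apply_eq] at hg0
      exact hg0.symm
    | succ i ih =>
      have hedge : consecutiveRel g (g i.castSucc) (f i.succ) := by
        rw [← ih, ← hfg, consecutiveRel_apply_apply_iff f.injective]
        simp
      rw [← g.apply_symm_apply (f i.succ), consecutiveRel_apply_apply_iff g.injective,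
        Fin.val_castSucc, ← Fin.val_succ, ← Fin.ext_iff, g.symm_apply_eq] at hedge
      exact hedge

end

theorem stmt_6_general (m : ℕ) (V : Type*) (f g : Fin m ≃ V)
    (h : ∀ x y : V,
      (∃ i : ℕ, ∃ h : i + 1 < m, x = f ⟨i, Nat.lt_of_succ_lt h⟩ ∧ y = f ⟨i + 1, h⟩) ↔
      (∃ i : ℕ, ∃ h : i + 1 < m, x = g ⟨i, Nat.lt_of_succ_lt h⟩ ∧ y = g ⟨i + 1, h⟩)) :
    f = g :=
  Equiv.eq_of_consecutiveRel_eq (funext₂ fun x y => propext (h x y))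

/-- Two enumerations of a finite vertex set inducing the same
consecutive-edge relation are equal: a directed straight-line chain through all
vertices determines its vertex ordering uniquely. -/
theorem stmt_6 (m : ℕ) (V : Type*) [Fintype V] (f g : Fin m ≃ V)
    (h : ∀ x y : V,
      (∃ i : ℕ, ∃ h : i + 1 < m, x = f ⟨i, Nat.lt_of_succ_lt h⟩ ∧ y = f ⟨i + 1, h⟩) ↔
      (∃ i : ℕ, ∃ h : i + 1 < m, x = g ⟨i, Nat.lt_of_succ_lt h⟩ ∧ y = g ⟨i + 1, h⟩)) :
    f = g :=
  stmt_6_general m V f g h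
end
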